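/- arXiv:math-ph/0701070 — 5 statements merged into one kernel-verified Lean document; each statement's English description precedes it below -/
import Mathlib

section
/- Let d ≥ 1, let w be a nonnegative weight on finite nonempty subsets of ℤ^d and let α > 0 satisfy: for every x ∈ ℤ^d, Σ_{Λ ∋ x} e^{2α|Λ|}(e^{w(Λ)} − 1) ≤ α, where the sum ranges over all finite nonempty subsets Λ of ℤ^d containing x (in particular this family is summable). Then for every finite collection S of finite nonempty subsets of ℤ^d and every point x belonging to the union of the members of S, one has Σ_{Λ ∈ S, Λ ∋ x} Θ(S|Λ) ≤ α. -/
open scoped BigOperators Classical ENNReal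

abbrev Site (d : ℕ) := Fin d → ℤ

/-- A finite collection `T` of finite subsets of `ℤ^d` is connected if the graph on `T`
with an edge between two members whenever they intersect is connected. -/
def ConnColl {d : ℕ} (T : Finset (Finset (Site d))) : Prop :=
  (SimpleGraph.fromRel fun A B : T => ((A : Finset (Site d)) ∩ (B : Finset (Site d))).Nonempty).Connected

/-- `Θ(S|Λ) = Σ_{ν=1}^{|S|} Σ_{connected T ⊆ S, Λ ∈ T, |T| = ν} ∏_{Λ' ∈ T} ξ(Λ')`. -/
noncomputable def Theta {d : ℕ} (ξ : Finset (Site d) → ℝ)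
    (S : Finset (Finset (Site d))) (Λ : Finset (Site d)) : ℝ :=
  ∑ ν ∈ Finset.Icc 1 S.card,
    ∑ T ∈ S.powerset.filter (fun T => Λ ∈ T ∧ T.card = ν ∧ ConnColl T),
      ∏ Λ' ∈ T, ξ Λ'

/-!
Write `ξ(Λ) = e^{α|Λ|}(e^{w(Λ)} - 1) ≥ 0`. By strong induction on `S` we show that
`Σ_{Λ ∈ S, Λ ∋ y} Θ(S|Λ) ≤ α` for every site `y`, assuming only the finite version
`Σ_{Λ ∈ S, Λ ∋ y} ξ(Λ) e^{α|Λ|} ≤ α` of the hypothesis (a Kotecký–Preiss argument).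

Fix `Λ ∈ S` and put `S' = S \ {Λ}`. A connected `T ∋ Λ` is `Λ` together with some `T' ⊆ S'`,
and `T'` is determined by its set of connected components, each of which is a connected
subcollection `C ⊆ S'` meeting `Λ`. Hence
`Θ(S|Λ) ≤ ξ(Λ) ∏_C (1 + ξ(C)) ≤ ξ(Λ) exp Σ_C ξ(C)` with `ξ(C) = ∏_{A ∈ C} ξ(A)`.
Every such `C` contains some `A` with a point `y ∈ A ∩ Λ`, so by the induction hypothesis
`Σ_C ξ(C) ≤ Σ_{y ∈ Λ} Σ_{A ∈ S', A ∋ y} Θ(S'|A) ≤ α|Λ|`, and therefore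
`Θ(S|Λ) ≤ ξ(Λ) e^{α|Λ|} = e^{2α|Λ|}(e^{w(Λ)} - 1)`; summing over `Λ ∋ y` finishes the induction.
-/

theorem Finset.sum_powerset_prod_le_exp_sum {ι : Type*} {s : Finset ι} {f : ι → ℝ}
    (hf : ∀ i ∈ s, 0 ≤ f i) : ∑ t ∈ s.powerset, ∏ i ∈ t, f i ≤ Real.exp (∑ i ∈ s, f i) := by
  rw [← prod_one_add, Real.exp_sum]
  exact prod_le_prod (fun i hi => by linarith [hf i hi])
    fun i _ => (add_comm 1 (f i)).le.trans (Real.add_one_le_exp _)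

theorem Finset.sum_le_sum_sum_filter_of_forall_exists {ι κ R : Type*}
    [AddCommMonoid R] [PartialOrder R] [IsOrderedAddMonoid R] {s : Finset ι} {t : Finset κ}
    {r : ι → κ → Prop} [∀ i j, Decidable (r i j)] {f : ι → R} (hf : ∀ i ∈ s, 0 ≤ f i)
    (hr : ∀ i ∈ s, ∃ j ∈ t, r i j) :
    ∑ i ∈ s, f i ≤ ∑ j ∈ t, ∑ i ∈ s with r i j, f i := by
  rw [sum_comm' (t' := s) (s' := fun i => t.filter (r i)) (by simp only [mem_filter]; tauto)]
  refine sum_le_sum fun i hi => ?_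
  obtain ⟨j, hj, hij⟩ := hr i hi
  exact single_le_sum (f := fun _ => f i) (fun _ _ => hf i hi) (mem_filter.mpr ⟨hj, hij⟩)

theorem Finset.sum_le_of_tsum_ofReal_le {ι : Type*} {f : ι → ℝ} {a : ℝ} (ha : 0 ≤ a)
    (s : Finset ι) (hf : ∀ i ∈ s, 0 ≤ f i)
    (h : ∑' i, ENNReal.ofReal (f i) ≤ ENNReal.ofReal a) : ∑ i ∈ s, f i ≤ a := by
  rw [← ENNReal.ofReal_le_ofReal_iff ha, ENNReal.ofReal_sum_of_nonneg hf]
  exact (ENNReal.sum_le_tsum s).trans h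

namespace Polymer

open Finset

variable {d : ℕ}

def Adj (T : Finset (Finset (Site d))) (X Y : Finset (Site d)) : Prop :=
  X ∈ T ∧ Y ∈ T ∧ (X ∩ Y).Nonempty

instance (T : Finset (Finset (Site d))) : Std.Symm (Adj T) :=
  ⟨fun X Y ⟨hX, hY, h⟩ => ⟨hY, hX, inter_comm X Y ▸ h⟩⟩

abbrev Linked (T : Finset (Finset (Site d))) : Finset (Site d) → Finset (Site d) → Prop :=
  Relation.ReflTransGen (Adj T)

theorem Linked.symm {T : Finset (Finset (Site d))} {A B : Finset (Site d)} (h : Linked T A B) :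
    Linked T B A :=
  Std.Symm.symm _ _ h

theorem reachable_iff_linked {T : Finset (Finset (Site d))} (A B : T) :
    (SimpleGraph.fromRel fun X Y : T => ((X : Finset (Site d)) ∩ Y).Nonempty).Reachable A B ↔
      Linked T A B := by
  rw [SimpleGraph.reachable_iff_reflTransGen]
  constructor
  · refine fun h => Relation.ReflTransGen.lift Subtype.val (fun X Y hXY => ?_) _ _ h
    obtain ⟨-, hXY | hYX⟩ := SimpleGraph.fromRel_adj _ _ _ |>.mp hXY
    exacts [⟨X.2, Y.2, hXY⟩, Std.Symm.symm (r := Adj T) _ _ ⟨Y.2, X.2, hYX⟩]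
  · obtain ⟨B, hB⟩ := B
    intro h
    dsimp only at h
    revert hB
    induction h with
    | refl => exact fun _ => .refl
    | @tail C B _ hCB ih =>
      intro hB
      refine (ih hCB.1).trans ?_
      by_cases hCB' : C = B
      · subst hCB'; rfl
      · exact .single ((SimpleGraph.fromRel_adj ..).mpr ⟨by simpa using hCB', .inl hCB.2.2⟩)

theorem connColl_iff {T : Finset (Finset (Site d))} :
    ConnColl T ↔ T.Nonempty ∧ ∀ A ∈ T, ∀ B ∈ T, Linked T A B := by
  rw [ConnColl, SimpleGraph.connected_iff, SimpleGraph.Preconnected, nonempty_coe_sort, and_comm]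
  refine and_congr_right fun _ => ⟨fun h A hA B hB => ?_, fun h A B => ?_⟩
  · exact (reachable_iff_linked ⟨A, hA⟩ ⟨B, hB⟩).mp (h _ _)
  · exact (reachable_iff_linked A B).mpr (h A A.2 B B.2)

noncomputable def component (T : Finset (Finset (Site d))) (A : Finset (Site d)) :
    Finset (Finset (Site d)) :=
  T.filter (Linked T A)

noncomputable def components (T : Finset (Finset (Site d))) : Finset (Finset (Finset (Site d))) :=
  T.image (component T)

section Components

variable {T : Finset (Finset (Site d))} {A B : Finset (Site d)}

theorem mem_component : B ∈ component T A ↔ B ∈ T ∧ Linked T A B := mem_filter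

theorem component_subset : component T A ⊆ T := filter_subset _ _

theorem self_mem_component (hA : A ∈ T) : A ∈ component T A := mem_component.mpr ⟨hA, .refl⟩

theorem component_eq_of_linked (h : Linked T A B) : component T A = component T B := by
  ext C
  simp only [mem_component]
  exact and_congr_right fun _ => ⟨h.symm.trans, h.trans⟩

theorem linked_component (h : Linked T A B) : Linked (component T A) A B := by
  induction h with
  | refl => exact .refl
  | @tail C B hAC hCB ih =>
    exact ih.tail ⟨mem_component.mpr ⟨hCB.1, hAC⟩, mem_component.mpr ⟨hCB.2.1, hAC.tail hCB⟩,
      hCB.2.2⟩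

theorem connColl_component (hA : A ∈ T) : ConnColl (component T A) :=
  connColl_iff.mpr ⟨⟨A, self_mem_component hA⟩, fun _ hB _ hC =>
    (linked_component (mem_component.mp hB).2).symm.trans
      (linked_component (mem_component.mp hC).2)⟩

theorem prod_components {M : Type*} [CommMonoid M] (f : Finset (Site d) → M) :
    ∏ C ∈ components T, ∏ A ∈ C, f A = ∏ A ∈ T, f A := by
  refine prod_image' f fun A hA => prod_congr ?_ fun _ _ => rfl
  ext B
  simp only [mem_filter, mem_component]
  refine and_congr_right fun hB => ⟨fun h => (component_eq_of_linked h).symm, fun h => ?_⟩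
  exact (mem_component.mp (h ▸ self_mem_component hB)).2

theorem biUnion_components (T : Finset (Finset (Site d))) : (components T).biUnion id = T := by
  ext A
  simp only [components, mem_biUnion, mem_image, id, exists_exists_and_eq_and]
  exact ⟨fun ⟨_, _, hA⟩ => component_subset hA, fun hA => ⟨A, hA, self_mem_component hA⟩⟩

end Components

noncomputable def clusters (S : Finset (Finset (Site d))) (Λ : Finset (Site d)) :
    Finset (Finset (Finset (Site d))) :=
  S.powerset.filter fun C => ConnColl C ∧ ∃ A ∈ C, (A ∩ Λ).Nonempty

theorem exists_mem_component_inter_nonempty {T : Finset (Finset (Site d))} {Λ A : Finset (Site d)}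
    (hΛ : Λ ∉ T) (hA : A ∈ T) (h : Linked (insert Λ T) A Λ) :
    ∃ B ∈ component T A, (B ∩ Λ).Nonempty := by
  suffices ∀ X, Linked (insert Λ T) A X →
      X ∈ component T A ∨ ∃ B ∈ component T A, (B ∩ Λ).Nonempty from
    (this Λ h).resolve_left fun hΛ' => hΛ (component_subset hΛ')
  intro X hX
  induction hX with
  | refl => exact .inl (self_mem_component hA)
  | @tail C X _ hCX ih =>
    refine ih.elim (fun hC => ?_) .inr
    by_cases hXΛ : X = Λ
    · exact .inr ⟨C, hC, hXΛ ▸ hCX.2.2⟩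
    · have hXT : X ∈ T := (mem_insert.mp hCX.2.1).resolve_left hXΛ
      obtain ⟨hCT, hAC⟩ := mem_component.mp hC
      exact .inl (mem_component.mpr ⟨hXT, hAC.tail ⟨hCT, hXT, hCX.2.2⟩⟩)

theorem components_subset_clusters {S T : Finset (Finset (Site d))} {Λ : Finset (Site d)}
    (hΛ : Λ ∉ S) (hT : T ⊆ S) (hconn : ConnColl (insert Λ T)) :
    components T ⊆ clusters S Λ := by
  intro C hC
  obtain ⟨A, hA, rfl⟩ := mem_image.mp hC
  have hlinked := (connColl_iff.mp hconn).2 A (mem_insert_of_mem hA) Λ (mem_insert_self _ _)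
  exact mem_filter.mpr ⟨mem_powerset.mpr (component_subset.trans hT), connColl_component hA,
    exists_mem_component_inter_nonempty (fun h => hΛ (hT h)) hA hlinked⟩

section Theta

variable (ξ : Finset (Site d) → ℝ)

theorem Theta_eq_sum (S : Finset (Finset (Site d))) (Λ : Finset (Site d)) :
    Theta ξ S Λ = ∑ T ∈ S.powerset with Λ ∈ T ∧ ConnColl T, ∏ A ∈ T, ξ A := by
  rw [Theta, ← sum_fiberwise_of_maps_to (g := card) (t := Icc 1 S.card)]
  · refine sum_congr rfl fun ν _ => sum_congr ?_ fun _ _ => rfl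
    ext T
    simp only [mem_filter]
    tauto
  · simp only [mem_filter, mem_powerset, mem_Icc]
    exact fun T hT => ⟨card_pos.mpr ⟨Λ, hT.2.1⟩, card_le_card hT.1⟩

theorem Theta_insert {S : Finset (Finset (Site d))} {Λ : Finset (Site d)} (hΛ : Λ ∉ S) :
    Theta ξ (insert Λ S) Λ =
      ξ Λ * ∑ T ∈ S.powerset with ConnColl (insert Λ T), ∏ A ∈ T, ξ A := by
  rw [Theta_eq_sum, sum_filter, sum_powerset_insert hΛ, mul_sum, sum_filter]
  have hnot : ∀ T ∈ S.powerset, Λ ∉ T := fun T hT h => hΛ (mem_powerset.mp hT h)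
  rw [sum_eq_zero fun T hT => if_neg fun h => hnot T hT h.1, zero_add]
  refine sum_congr rfl fun T hT => ?_
  simp only [mem_insert_self, true_and, prod_insert (hnot T hT)]

end Theta

section Bounds

variable {ξ : Finset (Site d) → ℝ} {S : Finset (Finset (Site d))} {Λ : Finset (Site d)}

theorem sum_connColl_insert_le (hΛ : Λ ∉ S) (hξ : ∀ A ∈ S, 0 ≤ ξ A) :
    ∑ T ∈ S.powerset with ConnColl (insert Λ T), ∏ A ∈ T, ξ A ≤
      ∑ F ∈ (clusters S Λ).powerset, ∏ C ∈ F, ∏ A ∈ C, ξ A := by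
  have hinj : Set.InjOn (components (d := d)) (S.powerset.filter fun T => ConnColl (insert Λ T)) :=
    fun T₁ _ T₂ _ h => by
      rw [← biUnion_components T₁, ← biUnion_components T₂, h]
  calc ∑ T ∈ S.powerset with ConnColl (insert Λ T), ∏ A ∈ T, ξ A
      = ∑ F ∈ (S.powerset.filter fun T => ConnColl (insert Λ T)).image components,
          ∏ C ∈ F, ∏ A ∈ C, ξ A := by
        rw [sum_image hinj]
        exact sum_congr rfl fun T _ => (prod_components ξ).symm
    _ ≤ ∑ F ∈ (clusters S Λ).powerset, ∏ C ∈ F, ∏ A ∈ C, ξ A := by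
        refine sum_le_sum_of_subset_of_nonneg ?_ fun F hF _ => ?_
        · simp only [subset_iff, mem_image, mem_filter, mem_powerset]
          rintro _ ⟨T, ⟨hTS, hconn⟩, rfl⟩
          exact components_subset_clusters hΛ hTS hconn
        · exact prod_nonneg fun C hC => prod_nonneg fun A hA =>
            hξ A (mem_powerset.mp (mem_filter.mp (mem_powerset.mp hF hC)).1 hA)

theorem Theta_insert_le_mul_exp (hΛ : Λ ∉ S) (hξ : ∀ A ∈ insert Λ S, 0 ≤ ξ A) :
    Theta ξ (insert Λ S) Λ ≤ ξ Λ * Real.exp (∑ C ∈ clusters S Λ, ∏ A ∈ C, ξ A) := by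
  have hξS A (hA : A ∈ S) : 0 ≤ ξ A := hξ A (mem_insert_of_mem hA)
  rw [Theta_insert ξ hΛ]
  refine mul_le_mul_of_nonneg_left ?_ (hξ Λ (mem_insert_self _ _))
  refine (sum_connColl_insert_le hΛ hξS).trans (sum_powerset_prod_le_exp_sum fun C hC => ?_)
  exact prod_nonneg fun A hA => hξS A (mem_powerset.mp (mem_filter.mp hC).1 hA)

theorem sum_clusters_le (hξ : ∀ A ∈ S, 0 ≤ ξ A) :
    ∑ C ∈ clusters S Λ, ∏ A ∈ C, ξ A ≤ ∑ y ∈ Λ, ∑ A ∈ S with y ∈ A, Theta ξ S A := by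
  have hcover : ∀ C ∈ clusters S Λ, ∃ p ∈ (Λ ×ˢ S).filter (fun p => p.1 ∈ p.2), p.2 ∈ C := by
    intro C hC
    obtain ⟨hCS, -, A, hAC, y, hy⟩ := mem_filter.mp hC
    exact ⟨(y, A), mem_filter.mpr ⟨mem_product.mpr ⟨(mem_inter.mp hy).2,
      mem_powerset.mp hCS hAC⟩, (mem_inter.mp hy).1⟩, hAC⟩
  refine (sum_le_sum_sum_filter_of_forall_exists (fun C hC => ?_) hcover).trans ?_
  · exact prod_nonneg fun A hA => hξ A (mem_powerset.mp (mem_filter.mp hC).1 hA)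
  rw [sum_filter, sum_product]
  refine sum_le_sum fun y _ => ?_
  rw [sum_filter]
  refine sum_le_sum fun A hA => ?_
  split_ifs
  · rw [Theta_eq_sum]
    refine sum_le_sum_of_subset_of_nonneg ?_ fun T hT _ => ?_
    · intro C hC
      simp only [clusters, mem_filter] at hC ⊢
      exact ⟨hC.1.1, hC.2, hC.1.2.1⟩
    · exact prod_nonneg fun B hB => hξ B (mem_powerset.mp (mem_filter.mp hT).1 hB)
  · exact le_rfl

theorem Theta_insert_le_mul_exp_card (hΛ : Λ ∉ S) (hξ : ∀ A ∈ insert Λ S, 0 ≤ ξ A) {α : ℝ}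
    (hS : ∀ y, ∑ A ∈ S with y ∈ A, Theta ξ S A ≤ α) :
    Theta ξ (insert Λ S) Λ ≤ ξ Λ * Real.exp (α * Λ.card) := by
  have hclusters : ∑ C ∈ clusters S Λ, ∏ A ∈ C, ξ A ≤ α * Λ.card :=
    calc ∑ C ∈ clusters S Λ, ∏ A ∈ C, ξ A
        ≤ ∑ y ∈ Λ, ∑ A ∈ S with y ∈ A, Theta ξ S A :=
          sum_clusters_le fun A hA => hξ A (mem_insert_of_mem hA)
      _ ≤ ∑ _y ∈ Λ, α := sum_le_sum fun y _ => hS y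
      _ = α * Λ.card := by rw [sum_const, nsmul_eq_mul, mul_comm]
  calc Theta ξ (insert Λ S) Λ ≤ ξ Λ * Real.exp (∑ C ∈ clusters S Λ, ∏ A ∈ C, ξ A) :=
        Theta_insert_le_mul_exp hΛ hξ
    _ ≤ ξ Λ * Real.exp (α * Λ.card) :=
        mul_le_mul_of_nonneg_left (Real.exp_le_exp.mpr hclusters) (hξ Λ (mem_insert_self _ _))

end Bounds

theorem sum_Theta_le {ξ : Finset (Site d) → ℝ} {α : ℝ} (S : Finset (Finset (Site d)))
    (hξ : ∀ A ∈ S, 0 ≤ ξ A) (hS : ∀ y, ∑ Λ ∈ S with y ∈ Λ, ξ Λ * Real.exp (α * Λ.card) ≤ α)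
    (x : Site d) : ∑ Λ ∈ S with x ∈ Λ, Theta ξ S Λ ≤ α := by
  induction S using Finset.strongInduction generalizing x with
  | H S ih =>
    refine (sum_le_sum fun Λ hΛ => ?_).trans (hS x)
    have hΛS : Λ ∈ S := (mem_filter.mp hΛ).1
    have hξ' : ∀ A ∈ S.erase Λ, 0 ≤ ξ A := fun A hA => hξ A (mem_of_mem_erase hA)
    have hIH := ih (S.erase Λ) (erase_ssubset hΛS) hξ' fun y =>
      (sum_le_sum_of_subset_of_nonneg (filter_subset_filter _ (erase_subset Λ S))
        fun A hA _ => mul_nonneg (hξ A (mem_filter.mp hA).1) (Real.exp_nonneg _)).trans (hS y)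
    have := Theta_insert_le_mul_exp_card (notMem_erase Λ S) (by rwa [insert_erase hΛS]) hIH
    rwa [insert_erase hΛS] at this

end Polymer

theorem theta_sum_le_of_weight_bound_general
    (d : ℕ) (w : Finset (Site d) → ℝ)
    (hw : ∀ Λ : Finset (Site d), Λ.Nonempty → 0 ≤ w Λ)
    (α : ℝ) (hα : 0 < α)
    (hbound : ∀ x : Site d,
      ∑' Λ : {Λ : Finset (Site d) // x ∈ Λ},
        ENNReal.ofReal
          (Real.exp (2 * α * ((Λ : Finset (Site d)).card : ℝ)) *
            (Real.exp (w Λ) - 1)) ≤ ENNReal.ofReal α) :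
    ∀ S : Finset (Finset (Site d)), (∀ Λ ∈ S, Finset.Nonempty Λ) →
      ∀ x : Site d, x ∈ S.biUnion id →
        ∑ Λ ∈ S.filter (fun Λ => x ∈ Λ),
          Theta (fun Λ => Real.exp (α * (Λ.card : ℝ)) * (Real.exp (w Λ) - 1)) S Λ
          ≤ α := by
  intro S hS x _
  have hexp_sub_one (Λ) (hΛ : Λ ∈ S) : 0 ≤ Real.exp (w Λ) - 1 :=
    sub_nonneg.mpr (Real.one_le_exp (hw Λ (hS Λ hΛ)))
  refine Polymer.sum_Theta_le S (fun Λ hΛ => mul_nonneg (Real.exp_nonneg _) (hexp_sub_one Λ hΛ))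
    (fun y => ?_) x
  have hweight (Λ : Finset (Site d)) :
      Real.exp (α * Λ.card) * (Real.exp (w Λ) - 1) * Real.exp (α * Λ.card) =
        Real.exp (2 * α * Λ.card) * (Real.exp (w Λ) - 1) := by
    rw [mul_right_comm, ← Real.exp_add]
    ring_nf
  simp only [hweight]
  rw [← Finset.sum_subtype_eq_sum_filter]
  refine Finset.sum_le_of_tsum_ofReal_le hα.le _ (fun Λ hΛ => ?_) (hbound y)
  exact mul_nonneg (Real.exp_nonneg _) (hexp_sub_one Λ (Finset.mem_subtype.mp hΛ))

/-- If `Σ_{Λ ∋ x} e^{2α|Λ|}(e^{w(Λ)} - 1) ≤ α` for every site `x`, then for every finite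
collection `S` of finite nonempty subsets of `ℤ^d` and every `x` in the union of the
members of `S`, `Σ_{Λ ∈ S, Λ ∋ x} Θ(S|Λ) ≤ α`, where `Θ` is built from the weights
`ξ(Λ) = e^{α|Λ|}(e^{w(Λ)} - 1)`. -/
theorem theta_sum_le_of_weight_bound
    (d : ℕ) (hd : 1 ≤ d) (w : Finset (Site d) → ℝ)
    (hw : ∀ Λ : Finset (Site d), Λ.Nonempty → 0 ≤ w Λ)
    (α : ℝ) (hα : 0 < α)
    (hbound : ∀ x : Site d,
      ∑' Λ : {Λ : Finset (Site d) // x ∈ Λ},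
        ENNReal.ofReal
          (Real.exp (2 * α * ((Λ : Finset (Site d)).card : ℝ)) *
            (Real.exp (w Λ) - 1)) ≤ ENNReal.ofReal α) :
    ∀ S : Finset (Finset (Site d)), (∀ Λ ∈ S, Finset.Nonempty Λ) →
      ∀ x : Site d, x ∈ S.biUnion id →
        ∑ Λ ∈ S.filter (fun Λ => x ∈ Λ),
          Theta (fun Λ => Real.exp (α * (Λ.card : ℝ)) * (Real.exp (w Λ) - 1)) S Λ
          ≤ α :=
  theta_sum_le_of_weight_bound_general d w hw α hα hbound
end

section
/- Let n ≥ 1 and let η assign a real number to each unordered pair {i,j} of distinct elements of {1,…,n}. Then ∏_{1 ≤ i < j ≤ n} (1 + η({i,j})) = Σ_P ∏_{V ∈ P} σ(V), where the sum is over all set partitions P of {1,…,n}, and for a nonempty block V, σ(V) := Σ_G ∏_{{i,j} ∈ E(G)} η({i,j}), the sum over all connected simple graphs G with vertex set V (so σ(V) = 1 when |V| = 1). -/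
open scoped Classical

/-- `σ(V)`: the sum over all connected simple graphs `G` with vertex set `V` of the
product over the edges of `G` of `η`.  (For `|V| = 1` the unique graph has no edges
and contributes the empty product `1`.) -/
noncomputable def sigmaBlock {n : ℕ} (η : Fin n → Fin n → ℝ)
    (hsym : ∀ i j, η i j = η j i) (V : Finset (Fin n)) : ℝ :=
  ∑ G : SimpleGraph {x // x ∈ V},
    if G.Connected then
      ∏ e ∈ G.edgeFinset,
        Sym2.lift ⟨fun i j => η i.1 j.1, fun i j => hsym i.1 j.1⟩ e
    else 0

/-- A finset `P` of subsets of `{1,…,n}` is a set partition if all its blocks are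
nonempty and every point lies in exactly one block. -/
def IsSetPartition {n : ℕ} (P : Finset (Finset (Fin n))) : Prop :=
  (∀ V ∈ P, V.Nonempty) ∧ ∀ i : Fin n, ∃! V, V ∈ P ∧ i ∈ V

/-!
Expanding the product over all pairs gives `∑_G ∏_{e ∈ E(G)} η e`, the sum over all simple
graphs `G` on `{1,…,n}`. Sorting the graphs by the partition of the vertex set into connected
components, a graph whose components form `P` is the same thing as a choice of a connected graph
on each block of `P` (restrict to the blocks, or glue the blocks back together), and its weight is
the product of the weights of these connected graphs.
-/

open Finset SimpleGraph

theorem prod_Ioi_eq_prod_edgeFinset_top {α M : Type*} [LinearOrder α] [Fintype α]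
    [LocallyFiniteOrderTop α] [CommMonoid M] (f : Sym2 α → M) :
    ∏ i, ∏ j ∈ Ioi i, f s(i, j) = ∏ e ∈ (⊤ : SimpleGraph α).edgeFinset, f e := by
  rw [prod_sigma']
  refine prod_nbij (fun p => s(p.1, p.2)) ?_ ?_ ?_ (fun _ _ => rfl)
  · exact fun p hp => by simpa using (mem_Ioi.1 (mem_sigma.1 hp).2).ne
  · rintro ⟨a, b⟩ hab ⟨c, d⟩ hcd h
    simp only [coe_sigma, Set.mem_sigma_iff, coe_univ, Set.mem_univ, coe_Ioi, Set.mem_Ioi,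
      true_and, Sym2.eq, Sym2.rel_iff'] at hab hcd h
    rcases h with ⟨rfl, rfl⟩ | ⟨rfl, rfl⟩
    · rfl
    · exact absurd (hab.trans hcd) (lt_irrefl _)
  · intro e he
    induction e using Sym2.ind with
    | _ a b =>
      have hab : a ≠ b := by simpa using he
      rcases hab.lt_or_gt with h | h
      · exact ⟨⟨a, b⟩, by simpa using h, rfl⟩
      · exact ⟨⟨b, a⟩, by simpa using h, Sym2.eq_swap⟩

theorem prod_one_add_edgeFinset_top_eq_sum {α R : Type*} [Fintype α] [DecidableEq α]
    [CommSemiring R] (w : Sym2 α → R) :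
    ∏ e ∈ (⊤ : SimpleGraph α).edgeFinset, (1 + w e) =
      ∑ G : SimpleGraph α, ∏ e ∈ G.edgeFinset, w e := by
  rw [prod_one_add]
  symm
  refine sum_nbij (fun G => G.edgeFinset) (fun G _ => mem_powerset.2 (edgeFinset_mono le_top))
    (fun G _ H _ h => edgeFinset_inj.1 h) (fun t ht => ⟨fromEdgeSet t, mem_univ _, ?_⟩)
    (fun _ _ => rfl)
  ext e
  simpa using fun he => not_isDiag_of_mem_edgeFinset (mem_powerset.1 ht he)

theorem Sym2.mem_of_mem_map_val {α : Type*} {p : α → Prop} {e : Sym2 (Subtype p)} {x : α}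
    (hx : x ∈ e.map Subtype.val) : p x := by
  obtain ⟨y, -, rfl⟩ := Sym2.mem_map.1 hx
  exact y.2

namespace SimpleGraph

variable {α : Type*}

theorem Reachable.mem_of_adj_closed {G : SimpleGraph α} {s : Set α} {u v : α}
    (hs : ∀ a b, G.Adj a b → a ∈ s → b ∈ s) (h : G.Reachable u v) (hu : u ∈ s) : v ∈ s := by
  rw [reachable_iff_reflTransGen] at h
  induction h with
  | refl => exact hu
  | tail _ hbc ih => exact hs _ _ hbc ih

def induceFinset (G : SimpleGraph α) (V : Finset α) : SimpleGraph V :=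
  G.comap Subtype.val

def glue (P : Finset (Finset α)) (g : ∀ V : P, SimpleGraph V.1) : SimpleGraph α :=
  ⨆ V, (g V).map Subtype.val

section Glue

variable {P : Finset (Finset α)} {g : ∀ V : P, SimpleGraph V.1}

theorem glue_adj {a b : α} :
    (glue P g).Adj a b ↔ ∃ V : P, ∃ (ha : a ∈ V.1) (hb : b ∈ V.1), (g V).Adj ⟨a, ha⟩ ⟨b, hb⟩ := by
  simp only [glue, iSup_adj, map_adj']
  constructor
  · rintro ⟨V, -, ⟨a, ha⟩, ⟨b, hb⟩, hab, rfl, rfl⟩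
    exact ⟨V, ha, hb, hab⟩
  · rintro ⟨V, ha, hb, hab⟩
    exact ⟨V, Subtype.val_injective.ne hab.ne, _, _, hab, rfl, rfl⟩

theorem Reachable.glue {V : P} {a b : V.1} (h : (g V).Reachable a b) :
    (glue P g).Reachable a b :=
  h.map ((Hom.ofLE (le_iSup (fun V => (g V).map Subtype.val) V)).comp
    (Embedding.map (Function.Embedding.subtype _) _).toHom)

theorem glue_induceFinset {G : SimpleGraph α} (h : ∀ a b, G.Adj a b → ∃ V ∈ P, a ∈ V ∧ b ∈ V) :
    glue P (fun V => G.induceFinset V) = G := by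
  ext a b
  rw [glue_adj]
  refine ⟨fun ⟨_, _, _, hab⟩ => hab, fun hab => ?_⟩
  obtain ⟨V, hV, ha, hb⟩ := h a b hab
  exact ⟨⟨V, hV⟩, ha, hb, hab⟩

theorem edgeFinset_glue [Fintype α] [DecidableEq α] :
    (glue P g).edgeFinset =
      univ.biUnion fun V => (g V).edgeFinset.map (Function.Embedding.subtype _).sym2Map := by
  rw [← coe_inj]
  simp only [coe_edgeFinset, coe_biUnion, coe_map, coe_univ, Set.mem_univ, Set.iUnion_true]
  rw [glue, edgeSet_iSup]
  congr! with V
  exact edgeSet_map (Function.Embedding.subtype _) (g V)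

end Glue

variable [Fintype α] [DecidableEq α]

noncomputable def componentFinset (G : SimpleGraph α) (i : α) : Finset α :=
  univ.filter (G.Reachable i)

noncomputable def componentFinsets (G : SimpleGraph α) : Finset (Finset α) :=
  univ.image G.componentFinset

variable {G : SimpleGraph α}

theorem mem_componentFinset {i j : α} : j ∈ G.componentFinset i ↔ G.Reachable i j := by
  simp [componentFinset]

theorem self_mem_componentFinset (i : α) : i ∈ G.componentFinset i :=
  mem_componentFinset.2 (Reachable.refl i)

theorem mem_componentFinsets {V : Finset α} :
    V ∈ G.componentFinsets ↔ ∃ i, G.componentFinset i = V := by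
  simp [componentFinsets]

theorem componentFinset_eq_of_reachable {i j : α} (h : G.Reachable i j) :
    G.componentFinset i = G.componentFinset j := by
  ext k
  simp only [mem_componentFinset]
  exact ⟨h.symm.trans, h.trans⟩

theorem induceFinset_componentFinset_connected (i : α) :
    (G.induceFinset (G.componentFinset i)).Connected := by
  have h : (G.componentFinset i : Set α) = (G.connectedComponentMk i).supp := by
    ext j
    simp [componentFinset, reachable_comm (u := i)]
  have hC : (G.induce (G.connectedComponentMk i).supp).Connected :=
    (G.connectedComponentMk i).connected_toSimpleGraph
  rw [← h] at hC
  exact hC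

end SimpleGraph

section SetPartition

variable {n : ℕ}

theorem IsSetPartition.eq_of_mem {P : Finset (Finset (Fin n))} (hP : IsSetPartition P)
    {V W : Finset (Fin n)} {i : Fin n} (hV : V ∈ P) (hW : W ∈ P) (hiV : i ∈ V) (hiW : i ∈ W) :
    V = W :=
  (hP.2 i).unique ⟨hV, hiV⟩ ⟨hW, hiW⟩

theorem isSetPartition_componentFinsets (G : SimpleGraph (Fin n)) :
    IsSetPartition G.componentFinsets := by
  refine ⟨fun V hV => ?_, fun i => ⟨G.componentFinset i,
    ⟨mem_componentFinsets.2 ⟨i, rfl⟩, self_mem_componentFinset i⟩, ?_⟩⟩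
  · obtain ⟨i, rfl⟩ := mem_componentFinsets.1 hV
    exact ⟨i, self_mem_componentFinset i⟩
  · rintro _ ⟨hV, hi⟩
    obtain ⟨j, rfl⟩ := mem_componentFinsets.1 hV
    exact componentFinset_eq_of_reachable (mem_componentFinset.1 hi)

variable {P : Finset (Finset (Fin n))} {g : ∀ V : P, SimpleGraph V.1}

theorem componentFinset_glue (hP : IsSetPartition P) (hg : ∀ V, (g V).Connected) {V : P}
    {i : Fin n} (hi : i ∈ V.1) : (glue P g).componentFinset i = V := by
  ext j
  rw [mem_componentFinset]
  refine ⟨fun hij => hij.mem_of_adj_closed (s := V.1) ?_ hi, fun hj => ?_⟩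
  · intro a b hab ha
    obtain ⟨W, haW, hbW, -⟩ := glue_adj.1 hab
    rwa [hP.eq_of_mem V.2 W.2 ha haW]
  · exact ((hg V).preconnected ⟨i, hi⟩ ⟨j, hj⟩).glue

theorem componentFinsets_glue (hP : IsSetPartition P) (hg : ∀ V, (g V).Connected) :
    (glue P g).componentFinsets = P := by
  ext V
  rw [mem_componentFinsets]
  constructor
  · rintro ⟨i, rfl⟩
    obtain ⟨W, ⟨hW, hiW⟩, -⟩ := hP.2 i
    rw [componentFinset_glue hP hg (V := ⟨W, hW⟩) hiW]
    exact hW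
  · intro hV
    obtain ⟨i, hi⟩ := hP.1 V hV
    exact ⟨i, componentFinset_glue hP hg (V := ⟨V, hV⟩) hi⟩

theorem induceFinset_glue (hP : IsSetPartition P) (V : P) : (glue P g).induceFinset V = g V := by
  ext a b
  refine ⟨fun hab => ?_, fun hab => glue_adj.2 ⟨V, a.2, b.2, hab⟩⟩
  obtain ⟨W, ha, hb, hab⟩ := glue_adj.1 hab
  obtain rfl : W = V := Subtype.ext (hP.eq_of_mem W.2 V.2 ha a.2)
  exact hab

theorem prod_edgeFinset_glue {M : Type*} [CommMonoid M] (hP : IsSetPartition P)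
    (w : Sym2 (Fin n) → M) :
    ∏ e ∈ (glue P g).edgeFinset, w e =
      ∏ V : P, ∏ e ∈ (g V).edgeFinset, w (e.map Subtype.val) := by
  rw [edgeFinset_glue, prod_biUnion]
  · simp
  · intro V _ W _ hVW
    simp only [Function.onFun, Finset.disjoint_left, mem_map, Function.Embedding.sym2Map_apply,
      Function.Embedding.coe_subtype]
    rintro _ ⟨e, -, rfl⟩ ⟨e', -, he⟩
    obtain ⟨x, hx⟩ : ∃ x, x ∈ e.map Subtype.val := ⟨_, Sym2.out_fst_mem _⟩
    have hxV := Sym2.mem_of_mem_map_val hx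
    rw [← he] at hx
    exact hVW (Subtype.ext (hP.eq_of_mem V.2 W.2 hxV (Sym2.mem_of_mem_map_val hx)))

theorem sum_componentFinsets_eq_prod_sum_connected {R : Type*} [CommSemiring R]
    (hP : IsSetPartition P) (w : Sym2 (Fin n) → R) :
    ∑ G ∈ univ.filter (fun G : SimpleGraph (Fin n) => G.componentFinsets = P),
        ∏ e ∈ G.edgeFinset, w e =
      ∏ V : P, ∑ H ∈ univ.filter (fun H : SimpleGraph V.1 => H.Connected),
        ∏ e ∈ H.edgeFinset, w (e.map Subtype.val) := by
  rw [prod_univ_sum]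
  symm
  refine sum_nbij' (glue P) (fun G V => G.induceFinset V) ?_ ?_ ?_ ?_ ?_
  · intro g hg
    simp only [Fintype.mem_piFinset, mem_filter, mem_univ, true_and] at hg ⊢
    exact componentFinsets_glue hP hg
  · intro G hG
    simp only [Fintype.mem_piFinset, mem_filter, mem_univ, true_and] at hG ⊢
    intro V
    obtain ⟨i, hi⟩ := mem_componentFinsets.1 (hG.symm ▸ V.2 : V.1 ∈ G.componentFinsets)
    rw [← hi]
    exact induceFinset_componentFinset_connected i
  · intro g _
    funext V
    exact induceFinset_glue hP V
  · intro G hG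
    obtain rfl := (mem_filter.1 hG).2
    exact glue_induceFinset fun a b hab => ⟨G.componentFinset a,
      mem_componentFinsets.2 ⟨a, rfl⟩, self_mem_componentFinset a,
      mem_componentFinset.2 hab.reachable⟩
  · intro g _
    exact (prod_edgeFinset_glue hP w).symm

theorem sigmaBlock_eq_sum_connected (η : Fin n → Fin n → ℝ) (hsym : ∀ i j, η i j = η j i)
    (V : Finset (Fin n)) :
    sigmaBlock η hsym V = ∑ H ∈ univ.filter (fun H : SimpleGraph V => H.Connected),
      ∏ e ∈ H.edgeFinset, Sym2.lift ⟨η, hsym⟩ (e.map Subtype.val) := by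
  rw [sigmaBlock, sum_filter]
  refine sum_congr rfl fun H _ => if_congr Iff.rfl (prod_congr rfl fun e _ => ?_) rfl
  induction e using Sym2.ind
  rfl

end SetPartition

theorem prod_one_add_eq_sum_partitions_connected_graphs_general
    (n : ℕ) (η : Fin n → Fin n → ℝ)
    (hsym : ∀ i j, η i j = η j i) :
    (∏ i : Fin n, ∏ j ∈ Finset.Ioi i, (1 + η i j)) =
      ∑ P ∈ Finset.univ.filter (fun P : Finset (Finset (Fin n)) => IsSetPartition P),
        ∏ V ∈ P, sigmaBlock η hsym V := by
  set w : Sym2 (Fin n) → ℝ := Sym2.lift ⟨η, hsym⟩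
  calc (∏ i : Fin n, ∏ j ∈ Finset.Ioi i, (1 + η i j))
      = ∏ e ∈ (⊤ : SimpleGraph (Fin n)).edgeFinset, (1 + w e) :=
        prod_Ioi_eq_prod_edgeFinset_top fun e => 1 + w e
    _ = ∑ G : SimpleGraph (Fin n), ∏ e ∈ G.edgeFinset, w e :=
        prod_one_add_edgeFinset_top_eq_sum w
    _ = ∑ P ∈ univ.filter IsSetPartition,
          ∑ G ∈ univ.filter (fun G : SimpleGraph (Fin n) => G.componentFinsets = P),
            ∏ e ∈ G.edgeFinset, w e :=
        (sum_fiberwise_of_maps_to (fun G _ =>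
          mem_filter.2 ⟨mem_univ _, isSetPartition_componentFinsets G⟩) _).symm
    _ = _ := by
        refine sum_congr rfl fun P hP => ?_
        rw [sum_componentFinsets_eq_prod_sum_connected (mem_filter.1 hP).2, ← prod_coe_sort P]
        simp only [sigmaBlock_eq_sum_connected]
        rfl

/-- For `n ≥ 1` and a symmetric `η` on pairs of distinct elements of `{1,…,n}`,
`∏_{1≤i<j≤n} (1 + η(i,j)) = Σ_P ∏_{V ∈ P} σ(V)`, the sum over set partitions `P`
of `{1,…,n}`, where `σ(V)` sums over connected simple graphs with vertex set `V`. -/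
theorem prod_one_add_eq_sum_partitions_connected_graphs
    (n : ℕ) (hn : 1 ≤ n) (η : Fin n → Fin n → ℝ)
    (hsym : ∀ i j, η i j = η j i) :
    (∏ i : Fin n, ∏ j ∈ Finset.Ioi i, (1 + η i j)) =
      ∑ P ∈ Finset.univ.filter (fun P : Finset (Finset (Fin n)) => IsSetPartition P),
        ∏ V ∈ P, sigmaBlock η hsym V :=
  prod_one_add_eq_sum_partitions_connected_graphs_general n η hsym
end

section
/- Let d ≥ 1 and let c assign a real number to each finite nonempty subset of ℤ^d, translation invariantly (c(X + a) = c(X) for all a ∈ ℤ^d), with Σ_{X ∋ 0} |c(X)| < ∞ (sum over all finite nonempty subsets containing the origin). Then for every sequence (Λ_m) of finite nonempty subsets of ℤ^d tending to ℤ^d in the van Hove sense, lim_{m→∞} (1/|Λ_m|) Σ_{X ⊆ Λ_m} c(X) = Σ_{X ∋ 0} c(X)/|X|. -/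
/-!
Spreading the weight `c X` evenly over the points of `X` and translating each point to the
origin gives `∑_{∅ ≠ X ⊆ Λ} c X = ∑_{Y ∋ 0} c Y / |Y| · #{x ∈ Λ | Y + x ⊆ Λ}`. Divided by `|Λ_m|`,
the factor multiplying `c Y / |Y|` is a density in `[0, 1]` that tends to `1` by the van Hove
property, so dominated convergence for series, with dominating series `∑ |c Y|`, gives the limit.
-/

open scoped BigOperators Classical

/-- A sequence of finite nonempty subsets of `ℤ^d` tends to `ℤ^d` in the van Hove
sense: for every finite `Λ'`, the proportion of `x ∈ Λ_m` with `Λ' + x ⊆ Λ_m`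
tends to `1`. -/
def VanHove {d : ℕ} (Λ : ℕ → Finset (Site d)) : Prop :=
  (∀ m, (Λ m).Nonempty) ∧
    ∀ Λ' : Finset (Site d),
      Filter.Tendsto
        (fun m => (((Λ m).filter fun x => Λ'.image (· + x) ⊆ Λ m).card : ℝ) /
          ((Λ m).card : ℝ))
        Filter.atTop (nhds 1)

open Finset Filter Topology

theorem Finset.sum_powerset_erase_empty_eq_sum_sum_div_card {α K : Type*} [DecidableEq α]
    [Field K] [CharZero K] (Λ : Finset α) (c : Finset α → K) :
    ∑ X ∈ Λ.powerset.erase ∅, c X = ∑ x ∈ Λ, ∑ X ∈ Λ.powerset with x ∈ X, c X / #X := by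
  calc ∑ X ∈ Λ.powerset.erase ∅, c X
      = ∑ X ∈ Λ.powerset.erase ∅, ∑ x ∈ X, c X / #X := by
        refine sum_congr rfl fun X hX => ?_
        have hX : (#X : K) ≠ 0 := by simpa using ne_of_mem_erase hX
        rw [sum_const, nsmul_eq_mul, mul_div_cancel₀ _ hX]
    _ = ∑ X ∈ Λ.powerset, ∑ x ∈ X, c X / #X := sum_erase _ (by simp)
    _ = ∑ x ∈ Λ, ∑ X ∈ Λ.powerset with x ∈ X, c X / #X :=
        sum_comm' fun X x => by
          simp only [mem_powerset, mem_filter]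
          exact ⟨fun h => ⟨⟨h.1, h.2⟩, h.1 h.2⟩, fun h => h.1⟩

theorem hasSum_subtype_ite_mem {β M : Type*} [AddCommMonoid M] [TopologicalSpace M]
    (p : β → Prop) [DecidablePred p] (s : Finset β) (f : β → M) :
    HasSum (fun b : Subtype p => if (b : β) ∈ s then f b else 0) (∑ b ∈ s with p b, f b) := by
  rw [← sum_subtype_eq_sum_filter]
  have hfinite : HasSum (fun b : Subtype p => if (b : β) ∈ s then f b else 0)
      (∑ b ∈ s.subtype p, if (b : β) ∈ s then f b else 0) :=
    hasSum_sum_of_ne_finset_zero fun b hb => if_neg (by simpa using hb)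
  convert hfinite using 1
  exact sum_congr rfl fun b hb => (if_pos (by simpa using hb)).symm

section Translation

variable {G : Type*} [AddGroup G] [DecidableEq G]

def translateMemZeroEquiv (x : G) : {Y : Finset G // 0 ∈ Y} ≃ {X : Finset G // x ∈ X} :=
  (Equiv.addRight x).finsetCongr.subtypeEquiv fun Y => by simp

theorem hasSum_ite_image_add_subset {c : Finset G → ℝ}
    (hinv : ∀ (X : Finset G) (a : G), c (X.image (· + a)) = c X) (Λ : Finset G) (x : G) :
    HasSum (fun Y : {Y : Finset G // 0 ∈ Y} =>
        if (Y : Finset G).image (· + x) ⊆ Λ then c Y / #(Y : Finset G) else 0)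
      (∑ X ∈ Λ.powerset with x ∈ X, c X / #X) := by
  convert (translateMemZeroEquiv x).hasSum_iff.2
    (hasSum_subtype_ite_mem (x ∈ ·) Λ.powerset fun X => c X / #X) using 2 with Y
  simp only [Function.comp_apply, translateMemZeroEquiv, Equiv.subtypeEquiv_apply,
    Equiv.finsetCongr_apply, map_eq_image, mem_powerset, Equiv.coe_toEmbedding, Equiv.coe_addRight,
    hinv, card_image_of_injective _ (add_left_injective x)]

theorem sum_powerset_erase_empty_eq_tsum_mul_card_filter {c : Finset G → ℝ}
    (hinv : ∀ (X : Finset G) (a : G), c (X.image (· + a)) = c X) (Λ : Finset G) :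
    ∑ X ∈ Λ.powerset.erase ∅, c X = ∑' Y : {Y : Finset G // 0 ∈ Y},
      c Y / #(Y : Finset G) * #{x ∈ Λ | (Y : Finset G).image (· + x) ⊆ Λ} := by
  rw [sum_powerset_erase_empty_eq_sum_sum_div_card,
    ← (hasSum_sum fun x _ => hasSum_ite_image_add_subset hinv Λ x).tsum_eq]
  refine tsum_congr fun Y => ?_
  rw [← sum_filter, sum_const, nsmul_eq_mul, mul_comm]

end Translation

theorem tendsto_tsum_mul_of_tendsto_one {α β : Type*} {l : Filter α} {w : β → ℝ}
    {ρ : α → β → ℝ} (hw : Summable fun k => |w k|) (hρ : ∀ k, Tendsto (ρ · k) l (𝓝 1))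
    (hρ_le : ∀ n k, |ρ n k| ≤ 1) :
    Tendsto (fun n => ∑' k, w k * ρ n k) l (𝓝 (∑' k, w k)) := by
  simpa using tendsto_tsum_of_dominated_convergence hw (fun k => (hρ k).const_mul (w k))
    (.of_forall fun n k => by
      rw [Real.norm_eq_abs, abs_mul]
      exact mul_le_of_le_one_right (abs_nonneg _) (hρ_le n k))

theorem Finset.abs_card_filter_div_card_le_one {α : Type*} (s : Finset α) (p : α → Prop)
    [DecidablePred p] : |(#{x ∈ s | p x} : ℝ) / #s| ≤ 1 := by
  rw [abs_of_nonneg (by positivity)]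
  exact div_le_one_of_le₀ (mod_cast card_filter_le s p) (by positivity)

theorem van_hove_density_limit_general
    (d : ℕ) (c : Finset (Site d) → ℝ)
    (hinv : ∀ (X : Finset (Site d)) (a : Site d), c (X.image (· + a)) = c X)
    (hsum : Summable (fun X : {X : Finset (Site d) // (0 : Site d) ∈ X} =>
      |c (X : Finset (Site d))|)) :
    ∀ Λ : ℕ → Finset (Site d), VanHove Λ →
      Filter.Tendsto
        (fun m => (((Λ m).card : ℝ))⁻¹ * ∑ X ∈ (Λ m).powerset.erase ∅, c X)
        Filter.atTop
        (nhds (∑' X : {X : Finset (Site d) // (0 : Site d) ∈ X},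
          c (X : Finset (Site d)) / ((X : Finset (Site d)).card : ℝ))) := by
  intro Λ hΛ
  have hweight : Summable fun Y : {Y : Finset (Site d) // 0 ∈ Y} =>
      |c Y / #(Y : Finset (Site d))| :=
    hsum.of_nonneg_of_le (fun _ => abs_nonneg _) fun Y => by
      rw [abs_div, Nat.abs_cast]
      exact div_nat_le_self_of_nonnneg (abs_nonneg _) _
  refine (tendsto_tsum_mul_of_tendsto_one hweight (fun Y => hΛ.2 (Y : Finset (Site d)))
    fun m Y => abs_card_filter_div_card_le_one _ _).congr fun m => ?_
  rw [sum_powerset_erase_empty_eq_tsum_mul_card_filter hinv, ← tsum_mul_left]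
  exact tsum_congr fun Y => by ring

/-- For a translation invariant, absolutely summable weight `c` on finite nonempty
subsets of `ℤ^d`, along any van Hove sequence,
`(1/|Λ_m|) Σ_{X ⊆ Λ_m, X ≠ ∅} c(X) → Σ_{X ∋ 0} c(X)/|X|`. -/
theorem van_hove_density_limit
    (d : ℕ) (hd : 1 ≤ d) (c : Finset (Site d) → ℝ)
    (hinv : ∀ (X : Finset (Site d)) (a : Site d), c (X.image (· + a)) = c X)
    (hsum : Summable (fun X : {X : Finset (Site d) // (0 : Site d) ∈ X} =>
      |c (X : Finset (Site d))|)) :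
    ∀ Λ : ℕ → Finset (Site d), VanHove Λ →
      Filter.Tendsto
        (fun m => (((Λ m).card : ℝ))⁻¹ * ∑ X ∈ (Λ m).powerset.erase ∅, c X)
        Filter.atTop
        (nhds (∑' X : {X : Finset (Site d) // (0 : Site d) ∈ X},
          c (X : Finset (Site d)) / ((X : Finset (Site d)).card : ℝ))) :=
  van_hove_density_limit_general d c hinv hsum
end

section
/- Let d ≥ 1 and let g assign a nonnegative real number to each finite nonempty subset of ℤ^d, translation invariantly (g(X + a) = g(X) for all a ∈ ℤ^d), with Σ_{X ∋ 0} g(X) < ∞ (sum over all finite nonempty subsets containing the origin). Then for every sequence (Λ_m) of finite nonempty subsets of ℤ^d tending to ℤ^d in the van Hove sense, lim_{m→∞} (1/|Λ_m|) Σ_{x ∈ Λ_m} Σ_{X ∋ x, X ⊄ Λ_m} g(X) = 0, where the inner sum is over finite subsets X containing x that are not contained in Λ_m. -/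
open scoped BigOperators Classical

/-! Translating each `X ∋ x` by `-x` turns the average boundary term over `Λ` into
`∑_{Z ∋ 0} g(Z) · φ_Λ(Z)`, where `φ_Λ(Z)` is the proportion of `x ∈ Λ` with `Z + x ⊄ Λ`.
Each `φ_{Λ_m}(Z)` lies in `[0, 1]` and tends to `0` by the van Hove property, so dominated
convergence for series (Tannery's theorem, dominated by `|g|`, which is summable since `g` is a
summable real family) gives the limit `0`. -/

open Filter Topology Finset

section Translation

variable {G : Type*} [AddGroup G] [DecidableEq G]

lemma image_add_image_add (X : Finset G) (a b : G) :
    (X.image (· + a)).image (· + b) = X.image (· + (a + b)) := by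
  rw [image_image]
  congr 1
  funext y
  exact add_assoc y a b

lemma image_add_image_add_neg (X : Finset G) (a : G) :
    (X.image (· + a)).image (· + -a) = X := by
  rw [image_add_image_add, add_neg_cancel]
  simp only [add_zero, image_id']

lemma image_add_neg_image_add (X : Finset G) (a : G) :
    (X.image (· + -a)).image (· + a) = X := by
  simpa using image_add_image_add_neg X (-a)

def translateBoundaryEquiv (Λ : Finset G) (x : G) :
    {Z : {Z : Finset G // 0 ∈ Z} // ¬ Z.1.image (· + x) ⊆ Λ} ≃
      {X : Finset G // x ∈ X ∧ ¬ X ⊆ Λ} where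
  toFun Z := ⟨Z.1.1.image (· + x), mem_image.2 ⟨0, Z.1.2, zero_add x⟩, Z.2⟩
  invFun X := ⟨⟨X.1.image (· + -x), mem_image.2 ⟨x, X.2.1, add_neg_cancel x⟩⟩, by
    rw [image_add_neg_image_add]; exact X.2.2⟩
  left_inv Z := by ext1; ext1; exact image_add_image_add_neg _ x
  right_inv X := by ext1; exact image_add_neg_image_add _ x

lemma tsum_boundary_eq_tsum_origin (g : Finset G → ℝ)
    (hinv : ∀ (X : Finset G) (a : G), g (X.image (· + a)) = g X) (Λ : Finset G) (x : G) :
    ∑' X : {X : Finset G // x ∈ X ∧ ¬ X ⊆ Λ}, g X =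
      ∑' Z : {Z : Finset G // 0 ∈ Z}, if Z.1.image (· + x) ⊆ Λ then 0 else g Z := by
  rw [← (translateBoundaryEquiv Λ x).tsum_eq]
  refine (tsum_congr fun Z => hinv _ x).trans ?_
  refine (_root_.tsum_subtype {Z : {Z : Finset G // 0 ∈ Z} | ¬ Z.1.image (· + x) ⊆ Λ}
    fun Z => g Z.1).trans ?_
  refine tsum_congr fun Z => ?_
  simp only [Set.indicator_apply, Set.mem_ofPred_eq, ite_not]

noncomputable def boundaryFraction (Λ Z : Finset G) : ℝ :=
  (#{x ∈ Λ | ¬ Z.image (· + x) ⊆ Λ} : ℝ) / #Λ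

lemma boundaryFraction_nonneg (Λ Z : Finset G) : 0 ≤ boundaryFraction Λ Z := by
  unfold boundaryFraction; positivity

lemma boundaryFraction_le_one (Λ Z : Finset G) : boundaryFraction Λ Z ≤ 1 :=
  div_le_one_of_le₀ (by exact_mod_cast card_filter_le _ _) (Nat.cast_nonneg _)

lemma average_boundary_term_eq_tsum (g : Finset G → ℝ)
    (hinv : ∀ (X : Finset G) (a : G), g (X.image (· + a)) = g X)
    (hsum : Summable fun Z : {Z : Finset G // 0 ∈ Z} => g Z) (Λ : Finset G) :
    (#Λ : ℝ)⁻¹ * ∑ x ∈ Λ, ∑' X : {X : Finset G // x ∈ X ∧ ¬ X ⊆ Λ}, g X =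
      ∑' Z : {Z : Finset G // 0 ∈ Z}, g Z * boundaryFraction Λ Z := by
  have hsummable (x : G) : Summable fun Z : {Z : Finset G // 0 ∈ Z} =>
      if Z.1.image (· + x) ⊆ Λ then 0 else g Z :=
    hsum.abs.of_norm_bounded fun Z => by split_ifs <;> simp
  simp_rw [tsum_boundary_eq_tsum_origin g hinv Λ, ← Summable.tsum_finsetSum fun x _ => hsummable x,
    ← tsum_mul_left]
  refine tsum_congr fun Z => ?_
  rw [sum_ite, sum_const_zero, zero_add, sum_const, nsmul_eq_mul, boundaryFraction]
  ring

end Translation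

lemma tendsto_boundaryFraction_of_vanHove {d : ℕ} {Λ : ℕ → Finset (Site d)} (hΛ : VanHove Λ)
    (Z : Finset (Site d)) : Tendsto (fun m => boundaryFraction (Λ m) Z) atTop (𝓝 0) := by
  have hfrac (m : ℕ) : boundaryFraction (Λ m) Z =
      1 - (#{x ∈ Λ m | Z.image (· + x) ⊆ Λ m} : ℝ) / #(Λ m) := by
    have hcard : (0 : ℝ) < #(Λ m) := by exact_mod_cast (hΛ.1 m).card_pos
    rw [boundaryFraction, eq_sub_iff_add_eq, ← add_div, div_eq_one_iff_eq hcard.ne']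
    exact_mod_cast (add_comm _ _).trans (card_filter_add_card_filter_not _)
  simpa [hfrac] using (hΛ.2 Z).const_sub 1

theorem van_hove_boundary_term_vanishes_general
    (d : ℕ) (g : Finset (Site d) → ℝ)
    (hinv : ∀ (X : Finset (Site d)) (a : Site d), g (X.image (· + a)) = g X)
    (hsum : Summable (fun X : {X : Finset (Site d) // (0 : Site d) ∈ X} =>
      g (X : Finset (Site d)))) :
    ∀ Λ : ℕ → Finset (Site d), VanHove Λ →
      Filter.Tendsto
        (fun m => (((Λ m).card : ℝ))⁻¹ *
          ∑ x ∈ Λ m, ∑' X : {X : Finset (Site d) // x ∈ X ∧ ¬ X ⊆ Λ m},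
            g (X : Finset (Site d)))
        Filter.atTop (nhds 0) := by
  intro Λ hΛ
  simp_rw [average_boundary_term_eq_tsum g hinv hsum]
  have hbound (m : ℕ) (Z : {Z : Finset (Site d) // 0 ∈ Z}) :
      ‖g Z * boundaryFraction (Λ m) Z‖ ≤ |g Z| := by
    rw [norm_mul, Real.norm_eq_abs, Real.norm_of_nonneg (boundaryFraction_nonneg _ _)]
    exact mul_le_of_le_one_right (abs_nonneg _) (boundaryFraction_le_one _ _)
  simpa using tendsto_tsum_of_dominated_convergence hsum.abs
    (fun Z => (tendsto_boundaryFraction_of_vanHove hΛ Z).const_mul (g Z))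
    (Eventually.of_forall hbound)

/-- For a translation invariant, nonnegative, summable weight `g` on finite nonempty
subsets of `ℤ^d`, along any van Hove sequence the boundary contribution vanishes:
`(1/|Λ_m|) Σ_{x ∈ Λ_m} Σ_{X ∋ x, X ⊄ Λ_m} g(X) → 0`. -/
theorem van_hove_boundary_term_vanishes
    (d : ℕ) (hd : 1 ≤ d) (g : Finset (Site d) → ℝ)
    (hg : ∀ X : Finset (Site d), X.Nonempty → 0 ≤ g X)
    (hinv : ∀ (X : Finset (Site d)) (a : Site d), g (X.image (· + a)) = g X)
    (hsum : Summable (fun X : {X : Finset (Site d) // (0 : Site d) ∈ X} =>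
      g (X : Finset (Site d)))) :
    ∀ Λ : ℕ → Finset (Site d), VanHove Λ →
      Filter.Tendsto
        (fun m => (((Λ m).card : ℝ))⁻¹ *
          ∑ x ∈ Λ m, ∑' X : {X : Finset (Site d) // x ∈ X ∧ ¬ X ⊆ Λ m},
            g (X : Finset (Site d)))
        Filter.atTop (nhds 0) :=
  van_hove_boundary_term_vanishes_general d g hinv hsum
end

section
/- Let d ≥ 1, let Λ ⊂ ℤ^d be finite and nonempty, let P(Λ) be the set of polymers B with B̲ ⊆ Λ, and let μ : P(Λ) → ℂ and α > 0 satisfy: for every finite nonempty Y ⊆ Λ, Σ_{B ∈ P(Λ) : B̲ ∩ Y ≠ ∅} |μ(B)| e^{α|B̲|} ≤ α|Y|. Then the partition function Z_Λ := 1 + Σ_{n ≥ 1} (1/n!) Σ_{B₁,…,B_n ∈ P(Λ)} ∏_{i=1}^{n} μ(B_i) ∏_{1 ≤ i < j ≤ n} (1 + χ(B_i,B_j)) converges absolutely and satisfies |Z_Λ| ≤ e^{α|Λ|}. -/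
open scoped BigOperators Classical ENNReal

/-- A polymer: a finite sequence `(Λ₁,…,Λ_k)`, `k ≥ 1`, of finite nonempty subsets of
`ℤ^d` whose intersection graph is connected. -/
structure Polymer (d : ℕ) where
  len : ℕ
  seq : Fin (len + 1) → Finset (Site d)
  nonempty : ∀ i, (seq i).Nonempty
  conn : (SimpleGraph.fromRel fun i j => ((seq i) ∩ (seq j)).Nonempty).Connected

/-- The support `B̲` of a polymer: the union of its constituent sets. -/
def Polymer.supp {d : ℕ} (B : Polymer d) : Finset (Site d) :=
  Finset.univ.biUnion B.seq

/-- `χ(B,B') = -1` if the supports intersect, `0` otherwise. -/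
noncomputable def chi {d : ℕ} (B B' : Polymer d) : ℝ :=
  if (B.supp ∩ B'.supp).Nonempty then -1 else 0

lemma chi_symm {d : ℕ} (B B' : Polymer d) : chi B B' = chi B' B := by
  unfold chi; rw [Finset.inter_comm]

/-- The Ursell function `φ(B₁,…,B_n) = (1/n!) Σ_{G ∈ C_n} ∏_{{i,j} ∈ E(G)} χ(Bᵢ,Bⱼ)`
(the sum over connected simple graphs on `{1,…,n}`; for `n = 1` this equals `1`). -/
noncomputable def ursell {d n : ℕ} (f : Fin n → Polymer d) : ℝ :=
  (n.factorial : ℝ)⁻¹ *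
    ∑ G : SimpleGraph (Fin n),
      if G.Connected then
        ∏ e ∈ G.edgeFinset,
          Sym2.lift ⟨fun i j => chi (f i) (f j), fun i j => chi_symm (f i) (f j)⟩ e
      else 0

/-- `P(Λ)`: polymers whose support is contained in `Λ`. -/
def PolyIn (d : ℕ) (Λ : Finset (Site d)) := {B : Polymer d // B.supp ⊆ Λ}

/-- The general term of the partition function `Z_Λ` (without the `1/n!`):
`∏ᵢ μ(Bᵢ) ∏_{i<j} (1 + χ(Bᵢ,Bⱼ))`. -/
noncomputable def Zterm {d : ℕ} {Λ : Finset (Site d)} {n : ℕ}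
    (μ : PolyIn d Λ → ℂ) (f : Fin n → PolyIn d Λ) : ℂ :=
  (∏ i, μ (f i)) *
    ((∏ i, ∏ j ∈ Finset.Ioi i, (1 + chi (f i).1 (f j).1) : ℝ) : ℂ)

/-!
Every factor `1 + χ(Bᵢ,Bⱼ)` lies in `[0,1]`, so the `n`-th term of `Z_Λ` is bounded by
`(Σ_B |μ(B)|)ⁿ / n!`. The Kotecký–Preiss condition for `Y = Λ`, together with `e^{α|B̲|} ≥ 1`,
gives `Σ_B |μ(B)| ≤ α|Λ|`, and the resulting exponential series sums to `e^{α|Λ|} - 1`.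
-/

lemma ENNReal.tsum_pi_fin_prod_eq_pow {X : Type*} (h : X → ℝ≥0∞) (m : ℕ) :
    ∑' f : Fin m → X, ∏ i, h (f i) = (∑' x, h x) ^ m := by
  induction m with
  | zero => simp
  | succ m ih =>
    rw [← (Fin.consEquiv fun _ => X).tsum_eq]
    simp only [Fin.consEquiv, Equiv.coe_fn_mk, Fin.prod_univ_succ, Fin.cons_zero, Fin.cons_succ]
    rw [ENNReal.tsum_prod']
    simp_rw [ENNReal.tsum_mul_left, ih, ENNReal.tsum_mul_right, pow_succ']

lemma ENNReal.tsum_pow_succ_div_factorial {s : ℝ} (hs : 0 ≤ s) :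
    ∑' n : ℕ, (((n + 1).factorial : ℝ≥0∞))⁻¹ * ENNReal.ofReal s ^ (n + 1)
      = ENNReal.ofReal (Real.exp s - 1) := by
  have hexp : HasSum (fun n : ℕ => s ^ n / n.factorial) (Real.exp s) := by
    rw [Real.exp_eq_exp_ℝ, NormedSpace.exp_eq_tsum_div]
    exact (Real.summable_pow_div_factorial s).hasSum
  have hsucc : HasSum (fun n : ℕ => s ^ (n + 1) / (n + 1).factorial) (Real.exp s - 1) := by
    simpa using (hasSum_nat_add_iff' 1).mpr hexp
  rw [← hsucc.tsum_eq, ENNReal.ofReal_tsum_of_nonneg (fun n => by positivity) hsucc.summable]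
  congr 1 with n
  rw [ENNReal.ofReal_div_of_pos (by positivity), ENNReal.ofReal_pow hs, ENNReal.ofReal_natCast,
    ENNReal.div_eq_inv_mul]

lemma summable_norm_and_norm_add_tsum_le {ι E : Type*} [NormedAddCommGroup E]
    {f : ι → E} {c : ℝ} (hc : 0 ≤ c) (h : ∑' i, ‖f i‖ₑ ≤ ENNReal.ofReal c) (a : E) :
    Summable (fun i => ‖f i‖) ∧ ‖a + ∑' i, f i‖ ≤ ‖a‖ + c := by
  refine ⟨tsum_enorm_ne_top_iff_summable_norm.mp (ne_top_of_le_ne_top ENNReal.ofReal_ne_top h), ?_⟩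
  have hsum : ‖∑' i, f i‖ ≤ c := by
    rw [← ENNReal.ofReal_le_ofReal_iff hc, ofReal_norm]
    exact (enorm_tsum_le_tsum_enorm (f := f)).trans h
  exact (norm_add_le _ _).trans (by linarith)

lemma one_add_chi_nonneg {d : ℕ} (B B' : Polymer d) : 0 ≤ 1 + chi B B' := by
  unfold chi; split <;> norm_num

lemma one_add_chi_le_one {d : ℕ} (B B' : Polymer d) : 1 + chi B B' ≤ 1 := by
  unfold chi; split <;> norm_num

lemma Polymer.supp_nonempty {d : ℕ} (B : Polymer d) : B.supp.Nonempty := by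
  obtain ⟨x, hx⟩ := B.nonempty 0
  exact ⟨x, Finset.mem_biUnion.mpr ⟨0, Finset.mem_univ _, hx⟩⟩

section PolyIn

variable {d : ℕ} {Λ : Finset (Site d)}

lemma PolyIn.supp_inter_nonempty (B : PolyIn d Λ) : (B.1.supp ∩ Λ).Nonempty := by
  rw [Finset.inter_eq_left.mpr B.2]
  exact B.1.supp_nonempty

lemma norm_Zterm_le {n : ℕ} (μ : PolyIn d Λ → ℂ) (f : Fin n → PolyIn d Λ) :
    ‖Zterm μ f‖ ≤ ∏ i, ‖μ (f i)‖ := by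
  have h0 : (0 : ℝ) ≤ ∏ i, ∏ j ∈ Finset.Ioi i, (1 + chi (f i).1 (f j).1) :=
    Finset.prod_nonneg fun _ _ => Finset.prod_nonneg fun _ _ => one_add_chi_nonneg _ _
  have h1 : ∏ i, ∏ j ∈ Finset.Ioi i, (1 + chi (f i).1 (f j).1) ≤ 1 :=
    Finset.prod_le_one (fun _ _ => Finset.prod_nonneg fun _ _ => one_add_chi_nonneg _ _)
      fun _ _ => Finset.prod_le_one (fun _ _ => one_add_chi_nonneg _ _)
        fun _ _ => one_add_chi_le_one _ _
  rw [Zterm, norm_mul, norm_prod, Complex.norm_real, Real.norm_of_nonneg h0]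
  exact mul_le_of_le_one_right (Finset.prod_nonneg fun _ _ => norm_nonneg _) h1

lemma enorm_inv_factorial_mul_Zterm_le {n : ℕ} (μ : PolyIn d Λ → ℂ) (f : Fin n → PolyIn d Λ) :
    ‖((n.factorial : ℂ))⁻¹ * Zterm μ f‖ₑ ≤ (n.factorial : ℝ≥0∞)⁻¹ * ∏ i, ‖μ (f i)‖ₑ := by
  rw [← ofReal_norm, norm_mul, norm_inv, Complex.norm_natCast,
    ENNReal.ofReal_mul (by positivity), ENNReal.ofReal_inv_of_pos (by positivity),
    ENNReal.ofReal_natCast]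
  gcongr
  simp only [← ofReal_norm]
  rw [← ENNReal.ofReal_prod_of_nonneg fun _ _ => norm_nonneg _]
  exact ENNReal.ofReal_le_ofReal (norm_Zterm_le μ f)

lemma tsum_enorm_series_Zterm_le (μ : PolyIn d Λ → ℂ) :
    ∑' p : Σ n : ℕ, Fin (n + 1) → PolyIn d Λ,
        ‖((((p.1 + 1).factorial : ℕ) : ℂ))⁻¹ * Zterm μ p.2‖ₑ
      ≤ ∑' n : ℕ, (((n + 1).factorial : ℝ≥0∞))⁻¹ * (∑' B, ‖μ B‖ₑ) ^ (n + 1) :=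
  calc _ ≤ ∑' p : Σ n : ℕ, Fin (n + 1) → PolyIn d Λ,
          (((p.1 + 1).factorial : ℝ≥0∞))⁻¹ * ∏ i, ‖μ (p.2 i)‖ₑ :=
        ENNReal.tsum_le_tsum fun p => enorm_inv_factorial_mul_Zterm_le μ p.2
    _ = _ := by
        rw [ENNReal.tsum_sigma']
        simp only [ENNReal.tsum_mul_left, ENNReal.tsum_pi_fin_prod_eq_pow fun B => ‖μ B‖ₑ]

lemma tsum_enorm_le_of_tsum_weighted_le (μ : PolyIn d Λ → ℂ) {α : ℝ} (hα : 0 ≤ α) {c : ℝ≥0∞}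
    (h : ∑' B : {B : PolyIn d Λ // ((B : PolyIn d Λ).1.supp ∩ Λ).Nonempty},
        ENNReal.ofReal (‖μ (B : PolyIn d Λ)‖ *
          Real.exp (α * (((B : PolyIn d Λ).1.supp.card : ℝ)))) ≤ c) :
    ∑' B, ‖μ B‖ₑ ≤ c :=
  calc ∑' B, ‖μ B‖ₑ
      ≤ ∑' B : PolyIn d Λ, ENNReal.ofReal (‖μ B‖ * Real.exp (α * B.1.supp.card)) :=
        ENNReal.tsum_le_tsum fun B => by
          rw [← ofReal_norm]
          exact ENNReal.ofReal_le_ofReal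
            (le_mul_of_one_le_right (norm_nonneg _) (Real.one_le_exp (by positivity)))
    _ = _ := ((Equiv.subtypeUnivEquiv PolyIn.supp_inter_nonempty).tsum_eq _).symm
    _ ≤ c := h

end PolyIn

theorem partition_function_abs_le_general
    (d : ℕ) (Λ : Finset (Site d)) (hΛ : Λ.Nonempty)
    (μ : PolyIn d Λ → ℂ) (α : ℝ) (hα : 0 < α)
    (h : ∀ Y : Finset (Site d), Y.Nonempty → Y ⊆ Λ →
      ∑' B : {B : PolyIn d Λ // ((B : PolyIn d Λ).1.supp ∩ Y).Nonempty},
        ENNReal.ofReal (‖μ (B : PolyIn d Λ)‖ *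
          Real.exp (α * (((B : PolyIn d Λ).1.supp.card : ℝ))))
        ≤ ENNReal.ofReal (α * (Y.card : ℝ))) :
    Summable (fun p : Σ n : ℕ, Fin (n + 1) → PolyIn d Λ =>
        ‖((((p.1 + 1).factorial : ℕ) : ℂ))⁻¹ * Zterm μ p.2‖)
    ∧ ‖1 + ∑' p : Σ n : ℕ, Fin (n + 1) → PolyIn d Λ,
          ((((p.1 + 1).factorial : ℕ) : ℂ))⁻¹ * Zterm μ p.2‖
        ≤ Real.exp (α * (Λ.card : ℝ)) := by
  have hs : 0 ≤ α * (Λ.card : ℝ) := by positivity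
  have hμ : ∑' B, ‖μ B‖ₑ ≤ ENNReal.ofReal (α * Λ.card) :=
    tsum_enorm_le_of_tsum_weighted_le μ hα.le (h Λ hΛ subset_rfl)
  have hseries := (tsum_enorm_series_Zterm_le μ).trans <|
    (ENNReal.tsum_le_tsum fun n => by gcongr).trans (ENNReal.tsum_pow_succ_div_factorial hs).le
  obtain ⟨hsum, hnorm⟩ :=
    summable_norm_and_norm_add_tsum_le (sub_nonneg.mpr (Real.one_le_exp hs)) hseries 1
  exact ⟨hsum, by simpa using hnorm⟩

/-- Under the Kotecky–Preiss condition on `μ : P(Λ) → ℂ`, the partition function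
`Z_Λ = 1 + Σ_{n≥1} (1/n!) Σ_{B₁,…,B_n ∈ P(Λ)} ∏ᵢ μ(Bᵢ) ∏_{i<j} (1+χ(Bᵢ,Bⱼ))`
converges absolutely and satisfies `|Z_Λ| ≤ e^{α|Λ|}`. -/
theorem partition_function_abs_le
    (d : ℕ) (hd : 1 ≤ d) (Λ : Finset (Site d)) (hΛ : Λ.Nonempty)
    (μ : PolyIn d Λ → ℂ) (α : ℝ) (hα : 0 < α)
    (h : ∀ Y : Finset (Site d), Y.Nonempty → Y ⊆ Λ →
      ∑' B : {B : PolyIn d Λ // ((B : PolyIn d Λ).1.supp ∩ Y).Nonempty},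
        ENNReal.ofReal (‖μ (B : PolyIn d Λ)‖ *
          Real.exp (α * (((B : PolyIn d Λ).1.supp.card : ℝ))))
        ≤ ENNReal.ofReal (α * (Y.card : ℝ))) :
    Summable (fun p : Σ n : ℕ, Fin (n + 1) → PolyIn d Λ =>
        ‖((((p.1 + 1).factorial : ℕ) : ℂ))⁻¹ * Zterm μ p.2‖)
    ∧ ‖1 + ∑' p : Σ n : ℕ, Fin (n + 1) → PolyIn d Λ,
          ((((p.1 + 1).factorial : ℕ) : ℂ))⁻¹ * Zterm μ p.2‖
        ≤ Real.exp (α * (Λ.card : ℝ)) :=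
  partition_function_abs_le_general d Λ hΛ μ α hα h
end
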